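/- arXiv:1509.00918 — 6 statements merged into one kernel-verified Lean document; each statement's English description precedes it below -/
import Mathlib

section
/- Let G₀ ← G₁ ← G₂ ← ⋯ be an inverse sequence of groups with surjective bonding maps λᵢ : Gᵢ → Gᵢ₋₁, and suppose each kernel ker λᵢ is contained in [ker λᵢ, Gᵢ]. Then for any i < j, the composite bonding map λ_{i,j} : G_j → G_i satisfies ker λ_{i,j} ⊆ [ker λ_{i,j}, G_j]. -/
/-- The composite bonding map `G (i + j) →* G i` of an inverse sequence of groups. -/
def compBond {G : ℕ → Type*} [∀ i, Group (G i)]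
    (f : ∀ i, G (i + 1) →* G i) (i : ℕ) : ∀ j : ℕ, G (i + j) →* G i
  | 0 => MonoidHom.id (G i)
  | (j + 1) => (compBond f i j).comp (f (i + j))

/-- Given an inverse sequence of groups with surjective bonding maps `λᵢ : Gᵢ₊₁ → Gᵢ`
such that each `ker λᵢ ⊆ [ker λᵢ, Gᵢ₊₁]`, every composite bonding map
`λ_{i,i+j} : G (i+j) → G i` (with `j > 0`) satisfies
`ker λ_{i,i+j} ⊆ [ker λ_{i,i+j}, G (i+j)]`. -/
theorem compBond_ker_strongly_perfect {G : ℕ → Type*} [∀ i, Group (G i)]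
    (f : ∀ i, G (i + 1) →* G i)
    (hsurj : ∀ i, Function.Surjective (f i))
    (hker : ∀ i, (f i).ker ≤ ⁅(f i).ker, (⊤ : Subgroup (G (i + 1)))⁆)
    (i j : ℕ) (hj : 0 < j) :
    (compBond f i j).ker ≤ ⁅(compBond f i j).ker, (⊤ : Subgroup (G (i + j)))⁆ := by
  clear hj
  induction j with
  | zero =>
    have : (compBond f i 0).ker = ⊥ := by
      show (MonoidHom.id (G i)).ker = ⊥
      simp
    rw [this]
    exact bot_le
  | succ j ih =>
    set F : G (i + (j + 1)) →* G (i + j) := f (i + j) with hF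
    set K := (compBond f i j).ker with hKdef
    have hcomp : compBond f i (j + 1) = (compBond f i j).comp F := rfl
    have hK' : (compBond f i (j + 1)).ker = K.comap F := by
      rw [hcomp, ← MonoidHom.comap_ker]
    have hkerle : F.ker ≤ (compBond f i (j + 1)).ker := by
      rw [hK']
      intro x hx
      simp only [Subgroup.mem_comap]
      rw [MonoidHom.mem_ker] at hx
      rw [hx]
      exact one_mem K
    have hmapK : Subgroup.map F ((compBond f i (j + 1)).ker) = K := by
      rw [hK']
      exact Subgroup.map_comap_eq_self_of_surjective (hsurj (i + j)) K
    have hmaptop : Subgroup.map F (⊤ : Subgroup (G (i + (j + 1)))) = ⊤ :=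
      Subgroup.map_top_of_surjective F (hsurj (i + j))
    have hmapcomm : Subgroup.map F ⁅(compBond f i (j + 1)).ker, (⊤ : Subgroup (G (i + (j + 1))))⁆
        = ⁅K, (⊤ : Subgroup (G (i + j)))⁆ := by
      rw [Subgroup.map_commutator, hmapK, hmaptop]
    intro x hx
    have h1 : F x ∈ K := by
      rw [hK'] at hx
      exact hx
    have h2 : F x ∈ Subgroup.map F ⁅(compBond f i (j + 1)).ker, (⊤ : Subgroup (G (i + (j + 1))))⁆ := by
      rw [hmapcomm]
      exact ih h1
    obtain ⟨y, hy, hyx⟩ := h2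
    have hmem : y⁻¹ * x ∈ F.ker := by
      rw [MonoidHom.mem_ker, map_mul, map_inv, hyx]
      simp
    have hle : F.ker ≤ ⁅(compBond f i (j + 1)).ker, (⊤ : Subgroup (G (i + (j + 1))))⁆ :=
      le_trans (hker (i + j)) (Subgroup.commutator_mono hkerle le_rfl)
    have : x = y * (y⁻¹ * x) := by group
    rw [this]
    exact mul_mem hy (hle hmem)
end

section
/- Let G₀ ← G₁ ← G₂ ← ⋯ be an inverse sequence of groups with surjective bonding maps λᵢ, and let Lᵢ ⊴ Gᵢ be an augmentation: λᵢ(Lᵢ) ≤ Lᵢ₋₁ for each i. Suppose for each i, ker λᵢ ⊆ [ker λᵢ, λᵢ⁻¹(Lᵢ₋₁)]. Then for any a < c, ker λ_{a+1,c} ⊆ [ker λ_{a+1,c}, λ_{a+1,c}⁻¹(L_a)], where λ_{a+1,c} = λ_{a+1} ∘ ⋯ ∘ λ_c. -/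
/-- Iterated augmentation: the composite bonding map carries `L (a + c)` into `L a`. -/
theorem compBond_map_L_le {G : ℕ → Type*} [∀ i, Group (G i)]
    (f : ∀ i, G (i + 1) →* G i) (L : ∀ i, Subgroup (G i))
    (haug : ∀ i, (L (i + 1)).map (f i) ≤ L i) (a : ℕ) :
    ∀ c, (L (a + c)).map (compBond f a c) ≤ L a
  | 0 => by simp [compBond]
  | (c + 1) => by
      show (L (a + (c + 1))).map ((compBond f a c).comp (f (a + c))) ≤ L a
      rw [← Subgroup.map_map]
      exact le_trans (Subgroup.map_mono (haug (a + c))) (compBond_map_L_le f L haug a c)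

/-- If an inverse sequence of groups with surjective bonding maps `λᵢ : Gᵢ₊₁ → Gᵢ`,
augmented by normal subgroups `Lᵢ ⊴ Gᵢ` with `λᵢ(Lᵢ₊₁) ≤ Lᵢ`, satisfies the strong
`{Lᵢ}`-perfectness property `ker λᵢ ⊆ [ker λᵢ, λᵢ⁻¹(Lᵢ)]`, then every composite
bonding map `λ : G (a+c) → G a` (with `c > 0`) satisfies
`ker λ ⊆ [ker λ, λ⁻¹(L a)]`. -/
theorem compBond_ker_strongly_relatively_perfect {G : ℕ → Type*} [∀ i, Group (G i)]
    (f : ∀ i, G (i + 1) →* G i)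
    (L : ∀ i, Subgroup (G i)) (hLnormal : ∀ i, (L i).Normal)
    (haug : ∀ i, (L (i + 1)).map (f i) ≤ L i)
    (hsurj : ∀ i, Function.Surjective (f i))
    (hker : ∀ i, (f i).ker ≤ ⁅(f i).ker, (L i).comap (f i)⁆)
    (a c : ℕ) (hc : 0 < c) :
    (compBond f a c).ker ≤ ⁅(compBond f a c).ker, (L a).comap (compBond f a c)⁆ := by
  clear hc
  induction c with
  | zero =>
      intro x hx
      have h1 : x = 1 := hx
      rw [h1]; exact one_mem _
  | succ c ih =>
      set lam' := compBond f a c with hlam'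
      set g := f (a + c) with hg
      set lam := lam'.comp g with hlam
      show lam.ker ≤ ⁅lam.ker, (L a).comap lam⁆
      set C := ⁅lam.ker, (L a).comap lam⁆ with hC
      -- ker g ≤ ker lam
      have hkerle : g.ker ≤ lam.ker := by
        intro z hz
        simp only [MonoidHom.mem_ker] at hz ⊢
        simp [hlam, MonoidHom.comp_apply, hz]
      -- comap g (L (a+c)) ≤ comap lam (L a)
      have hcomaple : (L (a + c)).comap g ≤ (L a).comap lam := by
        intro z hz
        simp only [Subgroup.mem_comap] at hz ⊢
        exact compBond_map_L_le f L haug a c ⟨g z, hz, rfl⟩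
      -- ker g ≤ C
      have hkerC : g.ker ≤ C := le_trans (hker (a + c)) (Subgroup.commutator_mono hkerle hcomaple)
      -- image computations
      have hmapK : lam.ker.map g = lam'.ker := by
        rw [show lam.ker = lam'.ker.comap g from (MonoidHom.comap_ker lam' g).symm,
          Subgroup.map_comap_eq_self_of_surjective (hsurj (a + c))]
      have hmapL : ((L a).comap lam).map g = (L a).comap lam' := by
        rw [show (L a).comap lam = ((L a).comap lam').comap g from
            (Subgroup.comap_comap (L a) lam' g).symm,
          Subgroup.map_comap_eq_self_of_surjective (hsurj (a + c))]
      have hCmap : C.map g = ⁅lam'.ker, (L a).comap lam'⁆ := by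
        rw [hC, Subgroup.map_commutator, hmapK, hmapL]
      intro x hx
      have hgx : g x ∈ lam'.ker := hx
      have : g x ∈ C.map g := by rw [hCmap]; exact ih hgx
      obtain ⟨y, hy, hgy⟩ := this
      have hxy : g (x * y⁻¹) = 1 := by
        rw [map_mul, map_inv, hgy]
        group
      have hmem : x * y⁻¹ ∈ g.ker := hxy
      have hfin := mul_mem (hkerC hmem) hy
      simpa using hfin
end

section
/- Let F be the free group on generators a₁,…,aₙ and let P be the (noncommutative) power series ring ℤ⟨⟨x₁,…,xₙ⟩⟩ modulo the relations xⱼ² = 0. The map sending aⱼ to 1 + xⱼ extends to an injective group homomorphism from F into the group of units of P. -/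
/-- The relation identifying the squares of the generators with `0`. -/
def MagnusRel (n : ℕ) : FreeAlgebra ℤ (Fin n) → FreeAlgebra ℤ (Fin n) → Prop :=
  fun a b => ∃ j : Fin n, a = FreeAlgebra.ι ℤ j * FreeAlgebra.ι ℤ j ∧ b = 0

/-- The ring `P = ℤ⟨x₁,…,xₙ⟩ / (x₁², …, xₙ²)`.  (Since `xⱼ² = 0`, the Magnus
representation `aⱼ ↦ 1 + xⱼ` takes values in this quotient; it is the image of the
corresponding power series ring `ℤ⟨⟨x₁,…,xₙ⟩⟩/(xⱼ²)` relevant to the statements below.) -/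
abbrev MagnusRing (n : ℕ) := RingQuot (MagnusRel n)

/-- The indeterminate `xⱼ` in `MagnusRing n`. -/
noncomputable def magnusX {n : ℕ} (j : Fin n) : MagnusRing n :=
  RingQuot.mkRingHom (MagnusRel n) (FreeAlgebra.ι ℤ j)

/-- The augmentation `ρ : P → ℤ` sending each `xⱼ` to `0`. -/
noncomputable def magnusAug (n : ℕ) : MagnusRing n →+* ℤ :=
  RingQuot.lift ⟨((FreeAlgebra.lift ℤ (fun _ : Fin n => (0 : ℤ))) : _).toRingHom, by
    rintro a b ⟨j, rfl, rfl⟩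
    simp⟩

/-- The fundamental ideal `Δ = ker ρ`, viewed as a `ℤ`-submodule of `P` (so that its
powers `Δᵏ` are the usual powers of the two-sided ideal `Δ`). -/
noncomputable def magnusDelta (n : ℕ) : Submodule ℤ (MagnusRing n) :=
  (RingHom.ker (magnusAug n)).restrictScalars ℤ

/-!
Let `xᵢ` act on the free abelian group on words by prepending the letter `i` to the words that
do not already start with `i` and killing the others. Then `xᵢ²` acts as `0`, so `P` acts, and
`(1 + xᵢ)ᵏ = 1 + k xᵢ`. For `k ≠ 0` this sends every combination whose longest words all start
with a letter `j ≠ i` to one whose longest words are one letter longer and all start with `i`.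
The ping-pong lemma then shows that the action of the free group is faithful.
-/

theorem Units.val_zpow_of_mul_self_eq_zero {R : Type*} [Ring R] {a : R} (ha : a * a = 0)
    (u : Rˣ) (hu : (u : R) = 1 + a) (k : ℤ) : ((u ^ k : Rˣ) : R) = 1 + k • a := by
  have hinv : ((u⁻¹ : Rˣ) : R) = 1 - a :=
    Units.inv_eq_of_mul_eq_one_right (by rw [hu]; noncomm_ring; simp [ha])
  induction k using Int.induction_on with
  | zero => simp
  | succ k ih =>
    rw [zpow_add_one, Units.val_mul, ih, hu, mul_add, mul_one, add_mul, one_mul, smul_mul_assoc,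
      ha, smul_zero, add_smul, one_smul]
    abel
  | pred k ih =>
    rw [zpow_sub_one, Units.val_mul, ih, hinv, mul_sub, mul_one, add_mul, one_mul,
      smul_mul_assoc, ha, smul_zero, sub_smul, one_smul]
    abel

theorem isUnit_one_add_of_mul_self_eq_zero {R : Type*} [Ring R] {a : R} (ha : a * a = 0) :
    IsUnit (1 + a) :=
  IsNilpotent.isUnit_one_add ⟨2, by rw [pow_two, ha]⟩

namespace Magnus

variable {ι : Type*}

def LeadsWith (i : ι) (d : ℕ) (f : List ι →₀ ℤ) : Prop :=
  (∀ w ∈ f.support, w.length ≤ d) ∧ (∃ w ∈ f.support, w.length = d) ∧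
    ∀ w ∈ f.support, w.length = d → w.head? = some i

lemma LeadsWith.letter_eq {i j : ι} {d e : ℕ} {f : List ι →₀ ℤ} (hi : LeadsWith i d f)
    (hj : LeadsWith j e f) : i = j := by
  obtain ⟨hle, ⟨w, hw, rfl⟩, hhead⟩ := hi
  have hde : e = w.length := le_antisymm (by
    obtain ⟨v, hv, rfl⟩ := hj.2.1
    exact hle v hv) (hj.1 w hw)
  exact Option.some_injective _ ((hhead w hw rfl).symm.trans (hj.2.2 w hw hde.symm))

variable [DecidableEq ι]

noncomputable def prependOp (i : ι) : Module.End ℤ (List ι →₀ ℤ) where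
  toFun f := (f.filter (·.head? ≠ some i)).mapDomain (List.cons i)
  map_add' f g := by simp only [Finsupp.filter_add, Finsupp.mapDomain_add]
  map_smul' k f := by
    simp only [Finsupp.filter_smul, Finsupp.mapDomain_smul, RingHom.id_apply]

lemma prependOp_apply_cons (i : ι) (f : List ι →₀ ℤ) (w : List ι) :
    prependOp i f (i :: w) = if w.head? = some i then 0 else f w := by
  simp [prependOp, Finsupp.mapDomain_apply List.cons_injective, Finsupp.filter_apply]

lemma support_prependOp_subset (i : ι) (f : List ι →₀ ℤ) :
    (prependOp i f).support ⊆ f.support.image (List.cons i) := by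
  refine Finsupp.mapDomain_support.trans (Finset.image_subset_image ?_)
  rw [Finsupp.support_filter]
  exact Finset.filter_subset _ _

lemma prependOp_mul_self (i : ι) : prependOp i * prependOp i = 0 := by
  refine LinearMap.ext fun f => ?_
  rw [Module.End.mul_apply, LinearMap.zero_apply]
  show Finsupp.mapDomain _ (Finsupp.filter _ _) = 0
  rw [(Finsupp.filter_eq_zero_iff _ _).mpr, Finsupp.mapDomain_zero]
  intro w hw
  by_contra hne
  obtain ⟨m, -, rfl⟩ := Finset.mem_image.mp
    (support_prependOp_subset i f (Finsupp.mem_support_iff.mpr hne))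
  exact hw rfl

lemma LeadsWith.add_smul_prependOp {i j : ι} (hij : i ≠ j) {k : ℤ} (hk : k ≠ 0) {d : ℕ}
    {f : List ι →₀ ℤ} (hf : LeadsWith j d f) :
    LeadsWith i (d + 1) (f + k • prependOp i f) := by
  obtain ⟨hle, ⟨w, hw, rfl⟩, hhead⟩ := hf
  have hnew : ∀ v ∈ (f + k • prependOp i f).support, v ∉ f.support →
      ∃ m ∈ f.support, i :: m = v := fun v hv hvf => by
    rcases Finset.mem_union.mp (Finsupp.support_add hv) with h | h
    · exact absurd h hvf
    · exact Finset.mem_image.mp (support_prependOp_subset i f (Finsupp.support_smul h))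
  refine ⟨fun v hv => ?_, ⟨i :: w, ?_, rfl⟩, fun v hv hlen => ?_⟩
  · by_cases hvf : v ∈ f.support
    · exact (hle v hvf).trans (Nat.le_succ _)
    · obtain ⟨m, hm, rfl⟩ := hnew v hv hvf
      exact Nat.succ_le_succ (hle m hm)
  · have hfiw : f (i :: w) = 0 :=
      Finsupp.notMem_support_iff.mp fun h => by simpa using hle _ h
    have hwi : w.head? ≠ some i := by
      rw [hhead w hw rfl]
      exact fun h => hij (Option.some_injective _ h).symm
    rw [Finsupp.mem_support_iff, Finsupp.add_apply, Finsupp.smul_apply, hfiw,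
      prependOp_apply_cons, if_neg hwi, zero_add, smul_eq_mul]
    exact mul_ne_zero hk (Finsupp.mem_support_iff.mp hw)
  · have hvf : v ∉ f.support := fun h => by simpa [hlen] using hle v h
    obtain ⟨m, -, rfl⟩ := hnew v hv hvf
    rfl

theorem injective_lift_of_val_eq_one_add_prependOp [Nontrivial ι]
    (u : ι → (Module.End ℤ (List ι →₀ ℤ))ˣ)
    (hu : ∀ i, (u i : Module.End ℤ _) = 1 + prependOp i) :
    Function.Injective (FreeGroup.lift u) := by
  have hlift : FreeGroup.lift u = (Monoid.CoprodI.lift fun i => FreeGroup.lift fun _ => u i).comp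
      freeGroupEquivCoprodI.toMonoidHom :=
    FreeGroup.ext_hom _ _ fun i => by simp
  rw [hlift, MonoidHom.coe_comp]
  refine (Monoid.CoprodI.lift_injective_of_ping_pong _
    (Or.inr ⟨Classical.arbitrary ι, ?_⟩) (fun i => {f | ∃ d, LeadsWith i d f})
    (fun i => ⟨Finsupp.single [i] 1, 1, ?_⟩) ?_ ?_).comp freeGroupEquivCoprodI.injective
  · rw [Cardinal.mk_congr FreeGroup.freeGroupUnitEquivInt, Cardinal.mk_int]
    exact (Cardinal.natCast_lt_aleph0 (n := 3)).le
  · simp [LeadsWith]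
  · exact fun i j hij =>
      Set.disjoint_left.mpr fun f ⟨_, hi⟩ ⟨_, hj⟩ => hij (hi.letter_eq hj)
  · intro i j hij h hh1
    obtain ⟨k, rfl⟩ : ∃ k : ℤ, FreeGroup.of () ^ k = h :=
      ⟨_, FreeGroup.freeGroupUnitEquivInt.symm_apply_apply h⟩
    have hk : k ≠ 0 := by rintro rfl; exact hh1 (zpow_zero _)
    rintro _ ⟨f, ⟨d, hf⟩, rfl⟩
    refine ⟨d + 1, ?_⟩
    show LeadsWith i (d + 1) (_ • f)
    rw [map_zpow, FreeGroup.lift_apply_of, Units.smul_def, Module.End.smul_def,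
      Units.val_zpow_of_mul_self_eq_zero (prependOp_mul_self i) _ (hu i)]
    exact hf.add_smul_prependOp hij hk

-- The letter `none` is never used: it only makes the alphabet nontrivial, as ping-pong needs.
theorem injective_lift_of_val_eq_one_add_prependOp_some
    (u : ι → (Module.End ℤ (List (Option ι) →₀ ℤ))ˣ)
    (hu : ∀ i, (u i : Module.End ℤ _) = 1 + prependOp (some i)) :
    Function.Injective (FreeGroup.lift u) := by
  rcases isEmpty_or_nonempty ι with _ | _
  · exact Function.injective_of_subsingleton _
  let v : Option ι → (Module.End ℤ (List (Option ι) →₀ ℤ))ˣ := fun o =>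
    (isUnit_one_add_of_mul_self_eq_zero (prependOp_mul_self o)).unit
  have hlift : FreeGroup.lift u = (FreeGroup.lift v).comp (FreeGroup.map some) :=
    FreeGroup.ext_hom _ _ fun i => Units.ext (by simp [v, hu])
  rw [hlift, MonoidHom.coe_comp]
  exact (injective_lift_of_val_eq_one_add_prependOp v fun o => rfl).comp
    (FreeGroup.map_injective (Option.some_injective ι))

end Magnus

open Magnus

lemma magnusX_mul_self {n : ℕ} (j : Fin n) : magnusX j * magnusX j = 0 := by
  rw [magnusX, ← map_mul]
  simpa using RingQuot.mkRingHom_rel (r := MagnusRel n) ⟨j, rfl, rfl⟩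

noncomputable def magnusRep (n : ℕ) :
    MagnusRing n →+* Module.End ℤ (List (Option (Fin n)) →₀ ℤ) :=
  RingQuot.lift ⟨(FreeAlgebra.lift ℤ fun j => prependOp (some j)).toRingHom, by
    rintro _ _ ⟨j, rfl, rfl⟩
    simp [prependOp_mul_self]⟩

lemma magnusRep_magnusX {n : ℕ} (j : Fin n) : magnusRep n (magnusX j) = prependOp (some j) := by
  simp [magnusRep, magnusX]

/-- **Magnus representation.** The map sending the free generator `aⱼ` to `1 + xⱼ`
extends to an injective group homomorphism from the free group on `n` generators into
the group of units of `P`. -/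
theorem magnus_representation_faithful (n : ℕ) :
    ∃ β : FreeGroup (Fin n) →* (MagnusRing n)ˣ,
      Function.Injective β ∧
        ∀ j : Fin n,
          ((β (FreeGroup.of j) : (MagnusRing n)ˣ) : MagnusRing n) = 1 + magnusX j := by
  let u (j : Fin n) : (MagnusRing n)ˣ :=
    (isUnit_one_add_of_mul_self_eq_zero (magnusX_mul_self j)).unit
  refine ⟨FreeGroup.lift u, ?_, fun j => by simp [u]⟩
  let ρ := Units.map (magnusRep n).toMonoidHom
  have hρβ : ρ.comp (FreeGroup.lift u) = FreeGroup.lift (ρ ∘ u) :=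
    FreeGroup.ext_hom _ _ fun j => by simp
  refine Function.Injective.of_comp (f := ρ) ?_
  rw [← MonoidHom.coe_comp, hρβ]
  exact injective_lift_of_val_eq_one_add_prependOp_some _ fun j => by
    simp [ρ, u, magnusRep_magnusX]
end

section
/- Let β : F → P* be the Magnus representation of the free group F into the units of the truncated noncommutative power series ring P, and let Δ be the ideal of power series with zero constant term. If w₁, w₂ ∈ F with β(w₁) − 1 ∈ Δʳ and β(w₂) − 1 ∈ Δˢ, then β([w₁,w₂]) − 1 ∈ Δ^{r+s}. -/
/-!
Writing `u = β w₁` and `v = β w₂`, the commutator satisfies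
`u⁻¹v⁻¹uv - 1 = u⁻¹v⁻¹ ((u - 1)(v - 1) - (v - 1)(u - 1))`. The bracket lies in `Δʳ Δˢ + Δˢ Δʳ`, and
`Δ^{r+s}` absorbs the left factor because `Δ` is a left ideal (when `r + s > 0`). When `r = s = 0`,
`u - 1` and `v - 1` are integers, so `u` and `v` commute and the commutator is trivial.
-/

section

variable {S A : Type*} [CommRing S] [Ring A] [Algebra S A]

theorem Ideal.mul_mem_restrictScalars_pow (I : Ideal A) {k : ℕ} (hk : k ≠ 0) (x : A) {z : A}
    (hz : z ∈ I.restrictScalars S ^ k) : x * z ∈ I.restrictScalars S ^ k := by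
  obtain ⟨m, rfl⟩ := Nat.exists_eq_add_one_of_ne_zero hk
  rw [pow_succ'] at hz ⊢
  refine Submodule.mul_induction_on hz (fun d hd e he => ?_) (fun a b ha hb => ?_)
  · exact mul_assoc x d e ▸ Submodule.mul_mem_mul (I.mul_mem_left x hd) he
  · exact mul_add x a b ▸ add_mem ha hb

theorem Units.val_commutator_sub_one (u v : Aˣ) :
    ((u⁻¹ * v⁻¹ * u * v : Aˣ) : A) - 1
      = ((u⁻¹ * v⁻¹ : Aˣ) : A) * (((u : A) - 1) * ((v : A) - 1) - ((v : A) - 1) * ((u : A) - 1)) := by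
  have hvu : ((u⁻¹ * v⁻¹ : Aˣ) : A) * (v * u) = 1 := by
    simp [mul_assoc]
  calc ((u⁻¹ * v⁻¹ * u * v : Aˣ) : A) - 1
      = ((u⁻¹ * v⁻¹ : Aˣ) : A) * (u * v) - ((u⁻¹ * v⁻¹ : Aˣ) : A) * (v * u) := by
        rw [hvu]; push_cast; noncomm_ring
    _ = _ := by noncomm_ring

theorem Units.commute_of_sub_one_mem_one {u : Aˣ} (hu : (u : A) - 1 ∈ (1 : Submodule S A))
    (v : Aˣ) : Commute u v := by
  obtain ⟨a, ha⟩ := Submodule.mem_one.mp hu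
  refine Units.ext ?_
  rw [Units.val_mul, Units.val_mul, ← sub_add_cancel (u : A) 1, ← ha]
  exact ((Algebra.commute_algebraMap_left a (v : A)).add_left (Commute.one_left _)).eq

theorem Units.val_commutator_sub_one_mem_pow (I : Ideal A) {u v : Aˣ} {r s : ℕ}
    (hu : (u : A) - 1 ∈ I.restrictScalars S ^ r) (hv : (v : A) - 1 ∈ I.restrictScalars S ^ s) :
    ((u⁻¹ * v⁻¹ * u * v : Aˣ) : A) - 1 ∈ I.restrictScalars S ^ (r + s) := by
  rcases Nat.eq_zero_or_pos (r + s) with hrs | hrs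
  · obtain ⟨rfl, rfl⟩ := Nat.add_eq_zero_iff.mp hrs
    rw [pow_zero] at hu
    have hcomm : u * v = v * u := (Units.commute_of_sub_one_mem_one hu v).eq
    rw [show u⁻¹ * v⁻¹ * u * v = 1 by rw [mul_assoc _ u, hcomm]; group, Units.val_one, sub_self]
    exact zero_mem _
  · rw [Units.val_commutator_sub_one]
    refine I.mul_mem_restrictScalars_pow hrs.ne' _ (sub_mem ?_ ?_)
    · exact pow_add (I.restrictScalars S) r s ▸ Submodule.mul_mem_mul hu hv
    · exact add_comm s r ▸ pow_add (I.restrictScalars S) s r ▸ Submodule.mul_mem_mul hv hu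

end

theorem magnus_commutator_deeper_general {n : ℕ} (β : FreeGroup (Fin n) →* (MagnusRing n)ˣ)
    (w₁ w₂ : FreeGroup (Fin n)) (r s : ℕ)
    (h₁ : ((β w₁ : (MagnusRing n)ˣ) : MagnusRing n) - 1 ∈ magnusDelta n ^ r)
    (h₂ : ((β w₂ : (MagnusRing n)ˣ) : MagnusRing n) - 1 ∈ magnusDelta n ^ s) :
    ((β (w₁⁻¹ * w₂⁻¹ * w₁ * w₂) : (MagnusRing n)ˣ) : MagnusRing n) - 1 ∈
      magnusDelta n ^ (r + s) := by
  rw [map_mul, map_mul, map_mul, map_inv, map_inv]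
  exact Units.val_commutator_sub_one_mem_pow (RingHom.ker (magnusAug n)) h₁ h₂

/-- If `β(w₁) − 1 ∈ Δʳ` and `β(w₂) − 1 ∈ Δˢ`, then `β([w₁,w₂]) − 1 ∈ Δ^{r+s}`,
where `β` is the Magnus representation `aⱼ ↦ 1 + xⱼ` and `[w₁,w₂] = w₁⁻¹w₂⁻¹w₁w₂`. -/
theorem magnus_commutator_deeper {n : ℕ} (β : FreeGroup (Fin n) →* (MagnusRing n)ˣ)
    (hβ : ∀ j : Fin n,
      ((β (FreeGroup.of j) : (MagnusRing n)ˣ) : MagnusRing n) = 1 + magnusX j)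
    (w₁ w₂ : FreeGroup (Fin n)) (r s : ℕ)
    (h₁ : ((β w₁ : (MagnusRing n)ˣ) : MagnusRing n) - 1 ∈ magnusDelta n ^ r)
    (h₂ : ((β w₂ : (MagnusRing n)ˣ) : MagnusRing n) - 1 ∈ magnusDelta n ^ s) :
    ((β (w₁⁻¹ * w₂⁻¹ * w₁ * w₂) : (MagnusRing n)ˣ) : MagnusRing n) - 1 ∈
      magnusDelta n ^ (r + s) :=
  magnus_commutator_deeper_general β w₁ w₂ r s h₁ h₂
end

section
/- For the Magnus representation β of the free group Fₙ, every element w of the k-th derived subgroup Fₙ^{(k)} satisfies β(w) − 1 ∈ Δ^{2^k}. -/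
/-!
For a two-sided ideal `I` of a ring, the units `u` with `u - 1 ∈ I` form a subgroup (the kernel
on units of `R → R ⧸ I`). If `u - 1 ∈ Iᵃ` and `v - 1 ∈ Iᵇ`, then
`⁅u, v⁆ - 1 = ((u - 1)(v - 1) - (v - 1)(u - 1)) u⁻¹ v⁻¹ ∈ Iᵃ⁺ᵇ`, so passing to commutator
subgroups doubles the exponent. Since `β` sends each generator to `1 + xⱼ ∈ 1 + Δ`, induction
along the derived series gives `β(Fₙ^{(k)}) - 1 ⊆ Δ^{2^k}`.
-/

namespace Ideal

variable {R : Type*} [Ring R]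

def unitsCongruenceSubgroup (I : Ideal R) [I.IsTwoSided] : Subgroup Rˣ :=
  (Units.map (Ideal.Quotient.mk I : R →* R ⧸ I)).ker

theorem mem_unitsCongruenceSubgroup {I : Ideal R} [I.IsTwoSided] {u : Rˣ} :
    u ∈ I.unitsCongruenceSubgroup ↔ (u : R) - 1 ∈ I := by
  rw [unitsCongruenceSubgroup, MonoidHom.mem_ker, Units.ext_iff]
  exact Ideal.Quotient.eq

open scoped commutatorElement in
theorem commutatorElement_sub_one_mem_pow {I : Ideal R} [I.IsTwoSided] {a b : ℕ} {u v : Rˣ}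
    (hu : (u : R) - 1 ∈ I ^ a) (hv : (v : R) - 1 ∈ I ^ b) :
    ((⁅u, v⁆ : Rˣ) : R) - 1 ∈ I ^ (a + b) := by
  have hvu : (v : R) * u * ↑(u⁻¹ * v⁻¹) = 1 := by
    rw [← Units.val_mul, ← Units.val_mul, mul_assoc, mul_inv_cancel_left, mul_inv_cancel,
      Units.val_one]
  have key : ((⁅u, v⁆ : Rˣ) : R) - 1 = (u * v - v * u) * ↑(u⁻¹ * v⁻¹) := by
    rw [sub_mul, hvu, commutatorElement_def]
    simp only [Units.val_mul, mul_assoc]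
  have hcomm : (u : R) * v - v * u = (u - 1) * (v - 1) - (v - 1) * (u - 1) := by noncomm_ring
  rw [key, hcomm]
  refine Ideal.mul_mem_right _ _ (sub_mem ?_ ?_)
  · rw [IsTwoSided.pow_add]; exact Ideal.mul_mem_mul hu hv
  · rw [add_comm, IsTwoSided.pow_add]; exact Ideal.mul_mem_mul hv hu

theorem commutator_unitsCongruenceSubgroup_pow_le (I : Ideal R) [I.IsTwoSided] (a b : ℕ) :
    ⁅(I ^ a).unitsCongruenceSubgroup, (I ^ b).unitsCongruenceSubgroup⁆ ≤
      (I ^ (a + b)).unitsCongruenceSubgroup := by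
  rw [Subgroup.commutator_le]
  intro u hu v hv
  rw [mem_unitsCongruenceSubgroup] at hu hv ⊢
  exact commutatorElement_sub_one_mem_pow hu hv

theorem map_derivedSeries_le_unitsCongruenceSubgroup_pow {G : Type*} [Group G] (I : Ideal R)
    [I.IsTwoSided] (f : G →* Rˣ) (hf : f.range ≤ I.unitsCongruenceSubgroup) (k : ℕ) :
    (derivedSeries G k).map f ≤ (I ^ 2 ^ k).unitsCongruenceSubgroup := by
  induction k with
  | zero =>
    simpa only [derivedSeries_zero, ← MonoidHom.range_eq_map, pow_zero, Submodule.pow_one]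
      using hf
  | succ k ih =>
    calc (derivedSeries G (k + 1)).map f
        = ⁅(derivedSeries G k).map f, (derivedSeries G k).map f⁆ := by
          rw [derivedSeries_succ, Subgroup.map_commutator]
      _ ≤ ⁅(I ^ 2 ^ k).unitsCongruenceSubgroup, (I ^ 2 ^ k).unitsCongruenceSubgroup⁆ :=
          Subgroup.commutator_mono ih ih
      _ ≤ (I ^ (2 ^ k + 2 ^ k)).unitsCongruenceSubgroup :=
          commutator_unitsCongruenceSubgroup_pow_le I _ _
      _ = (I ^ 2 ^ (k + 1)).unitsCongruenceSubgroup := by rw [← two_mul, ← pow_succ']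

end Ideal

theorem magnusAug_magnusX {n : ℕ} (j : Fin n) : magnusAug n (magnusX j) = 0 := by
  simp [magnusX, magnusAug, RingQuot.lift_mkRingHom_apply]

theorem range_le_unitsCongruenceSubgroup_ker_magnusAug {n : ℕ}
    (β : FreeGroup (Fin n) →* (MagnusRing n)ˣ)
    (hβ : ∀ j : Fin n,
      ((β (FreeGroup.of j) : (MagnusRing n)ˣ) : MagnusRing n) = 1 + magnusX j) :
    β.range ≤ (RingHom.ker (magnusAug n)).unitsCongruenceSubgroup := by
  rw [MonoidHom.range_eq_map, ← FreeGroup.closure_range_of, MonoidHom.map_closure,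
    Subgroup.closure_le]
  rintro _ ⟨_, ⟨j, rfl⟩, rfl⟩
  rw [SetLike.mem_coe, Ideal.mem_unitsCongruenceSubgroup, hβ, add_sub_cancel_left,
    RingHom.mem_ker, magnusAug_magnusX]

/-- For the Magnus representation `β`, every element `w` of the `k`-th derived subgroup
`Fₙ^{(k)}` satisfies `β(w) − 1 ∈ Δ^{2^k}`. -/
theorem magnus_derivedSeries_mem {n : ℕ} (β : FreeGroup (Fin n) →* (MagnusRing n)ˣ)
    (hβ : ∀ j : Fin n,
      ((β (FreeGroup.of j) : (MagnusRing n)ˣ) : MagnusRing n) = 1 + magnusX j)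
    (k : ℕ) (w : FreeGroup (Fin n)) (hw : w ∈ derivedSeries (FreeGroup (Fin n)) k) :
    ((β w : (MagnusRing n)ˣ) : MagnusRing n) - 1 ∈ magnusDelta n ^ (2 ^ k) := by
  have hβw := Ideal.map_derivedSeries_le_unitsCongruenceSubgroup_pow _ β
    (range_le_unitsCongruenceSubgroup_ker_magnusAug β hβ) k (Subgroup.mem_map_of_mem β hw)
  rw [magnusDelta, ← Submodule.restrictScalars_pow (pow_ne_zero k two_ne_zero)]
  exact Ideal.mem_unitsCongruenceSubgroup.mp hβw
end

section
/- The intersection of the derived series of a free group is trivial: ⋂_{k≥0} Fₙ^{(k)} = {1}; likewise the intersection of the lower central series is trivial: ⋂_{k≥1} (Fₙ)_k = {1}. -/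
/-!
Magnus' argument, with the ring of noncommutative power series truncated to integer matrices.
Write `x ≠ 1` in syllable form `a₁ ^ e₁ ⋯ a_r ^ e_r` (consecutive letters distinct, all `eᵢ ≠ 0`).
Let `N_a` be the `(r+1) × (r+1)` matrix with entry `1` at `(i - 1, i)` whenever `aᵢ = a`; since
consecutive letters differ, `N_a ^ 2 = 0`, so `a ↦ 1 + N_a` is a representation of the free group
and `x` acts as `∏ (1 + eᵢ N_{aᵢ})`, whose corner entry `(0, r)` is `e₁ ⋯ e_r ≠ 0`. In a filtered
ring the units `u` with `u - 1` in the `k`-th filtration step form a central series, so the `r`-th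
term of the lower central series is sent to matrices `u` with `u - 1` vanishing on and below the
`r`-th superdiagonal, in particular at the corner. Hence `x` leaves the lower central series, and
the derived series lies inside it.
-/

open scoped commutatorElement

section UnitsFiltration

variable {A : Type*} [Ring A] (F : ℕ → AddSubgroup A) [SetLike.GradedMonoid F]

/-- The condition on `u⁻¹` makes this a subgroup without assuming `F 0 = ⊤`. -/
def unitsFiltration (hF : Antitone F) (k : ℕ) : Subgroup Aˣ where
  carrier := {u | (u : A) - 1 ∈ F k ∧ ((u⁻¹ : Aˣ) : A) - 1 ∈ F k}
  one_mem' := by simp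
  mul_mem' := by
    rintro u v ⟨hu, hu'⟩ ⟨hv, hv'⟩
    -- `ab - 1 = (a - 1)(b - 1) + (a - 1) + (b - 1)`, applied to `uv` and to `v⁻¹u⁻¹`
    have key : ∀ a b : A, a - 1 ∈ F k → b - 1 ∈ F k → a * b - 1 ∈ F k := fun a b ha hb => by
      have hab : (a - 1) * (b - 1) ∈ F k :=
        hF (Nat.le_add_right k k) (SetLike.mul_mem_graded ha hb)
      convert add_mem (add_mem hab ha) hb using 1
      noncomm_ring
    exact ⟨key _ _ hu hv, by simpa [mul_inv_rev] using key _ _ hv' hu'⟩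
  inv_mem' := by
    rintro u ⟨hu, hu'⟩
    exact ⟨hu', by simpa using hu⟩

variable {F} {hF : Antitone F}

lemma val_mem_zero_of_mem_unitsFiltration {k : ℕ} {u : Aˣ} (hu : u ∈ unitsFiltration F hF k) :
    (u : A) ∈ F 0 := by
  simpa using add_mem (hF (Nat.zero_le k) hu.1) (SetLike.GradedOne.one_mem)

lemma val_commutator_sub_one_mem {j k : ℕ} {u v : Aˣ} (hu : u ∈ unitsFiltration F hF j)
    (hv : v ∈ unitsFiltration F hF k) : ((⁅u, v⁆ : Aˣ) : A) - 1 ∈ F (j + k) := by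
  have huv : (u : A) * v - v * u ∈ F (j + k) := by
    have hvu := SetLike.mul_mem_graded hv.1 hu.1
    rw [add_comm k j] at hvu
    convert sub_mem (SetLike.mul_mem_graded hu.1 hv.1) hvu using 1
    noncomm_ring
  have hinv : ((u⁻¹ : Aˣ) : A) * ((v⁻¹ : Aˣ) : A) ∈ F 0 :=
    SetLike.mul_mem_graded (val_mem_zero_of_mem_unitsFiltration (inv_mem hu))
      (val_mem_zero_of_mem_unitsFiltration (inv_mem hv))
  have h := SetLike.mul_mem_graded huv hinv
  rw [add_zero] at h
  convert h using 1
  simp only [commutatorElement_def, Units.val_mul, sub_mul, mul_assoc, Units.mul_inv_cancel_left,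
    Units.mul_inv]

lemma commutator_mem_unitsFiltration {j k : ℕ} {u v : Aˣ} (hu : u ∈ unitsFiltration F hF j)
    (hv : v ∈ unitsFiltration F hF k) : ⁅u, v⁆ ∈ unitsFiltration F hF (j + k) :=
  ⟨val_commutator_sub_one_mem hu hv, by
    simpa [commutatorElement_inv, add_comm] using val_commutator_sub_one_mem hv hu⟩

lemma lowerCentralSeries_le_comap_unitsFiltration {G : Type*} [Group G] (φ : G →* Aˣ)
    (hφ : ∀ g, φ g ∈ unitsFiltration F hF 1) (n : ℕ) :
    (⊤ : Subgroup G).lowerCentralSeries n ≤ (unitsFiltration F hF (n + 1)).comap φ :=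
  Subgroup.descending_central_series_ge_lower (fun n => (unitsFiltration F hF (n + 1)).comap φ)
    ⟨eq_top_iff.2 fun g _ => hφ g, fun _ _ hx g => by
      simpa [map_commutatorElement] using commutator_mem_unitsFiltration hx (hφ g)⟩ n

end UnitsFiltration

namespace Matrix

variable (R : Type*) [Ring R] (m : ℕ)

def upperBand (k : ℕ) : AddSubgroup (Matrix (Fin m) (Fin m) R) where
  carrier := {M | ∀ i j : Fin m, (j : ℕ) < i + k → M i j = 0}
  zero_mem' := by simp
  add_mem' hM hN i j hij := by simp [hM i j hij, hN i j hij]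
  neg_mem' hM i j hij := by simp [hM i j hij]

variable {R m}

lemma upperBand_antitone : Antitone (upperBand R m) :=
  fun _ _ hkl _ hM i j hij => hM i j (by omega)

instance : SetLike.GradedMonoid (upperBand R m) where
  one_mem i j hij := one_apply_ne (by omega)
  mul_mem {k l} M N hM hN i j hij := by
    rw [mul_apply]
    refine Finset.sum_eq_zero fun c _ => ?_
    by_cases hc : (c : ℕ) < i + k
    · simp [hM i c hc]
    · simp [hN c j (by omega)]

end Matrix

namespace Units

variable {A : Type*} [Ring A] {x : A}

def oneAddOfMulSelfEqZero (hx : x * x = 0) : Aˣ where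
  val := 1 + x
  inv := 1 - x
  val_inv := by noncomm_ring; simp [hx]
  inv_val := by noncomm_ring; simp [hx]

lemma val_oneAddOfMulSelfEqZero (hx : x * x = 0) : (oneAddOfMulSelfEqZero hx : A) = 1 + x := rfl

lemma val_inv_oneAddOfMulSelfEqZero (hx : x * x = 0) :
    ((oneAddOfMulSelfEqZero hx)⁻¹ : Aˣ) = (1 - x : A) := rfl

lemma val_oneAddOfMulSelfEqZero_zpow (hx : x * x = 0) (n : ℤ) :
    ((oneAddOfMulSelfEqZero hx ^ n : Aˣ) : A) = 1 + n • x := by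
  induction n using Int.induction_on with
  | zero => simp
  | succ n ih =>
    rw [zpow_add_one, val_mul, ih, val_oneAddOfMulSelfEqZero]
    simp only [mul_add, add_mul, one_mul, mul_one, smul_mul_assoc, hx, smul_zero, add_smul,
      one_smul]
    abel
  | pred n ih =>
    rw [zpow_sub_one, val_mul, ih, val_inv_oneAddOfMulSelfEqZero]
    simp only [mul_sub, add_mul, one_mul, mul_one, smul_mul_assoc, hx, smul_zero, sub_smul,
      one_smul]
    abel

end Units

namespace Matrix

variable {α : Type*} [DecidableEq α]

/-- Index `i` stands for the prefix of length `i` of `s`: `letterShift s a` is the Magnus variable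
`X_a`, extending a prefix by one letter when that letter is `a`. -/
def letterShift (s : List α) (a : α) : Matrix (Fin (s.length + 1)) (Fin (s.length + 1)) ℤ :=
  of fun i j => if (j : ℕ) = i + 1 ∧ s[(i : ℕ)]? = some a then 1 else 0

lemma letterShift_apply (s : List α) (a : α) (i j : Fin (s.length + 1)) :
    letterShift s a i j = if (j : ℕ) = i + 1 ∧ s[(i : ℕ)]? = some a then 1 else 0 := rfl

lemma mul_letterShift_apply_zero (s : List α) (a : α)
    (M : Matrix (Fin (s.length + 1)) (Fin (s.length + 1)) ℤ) (i : Fin (s.length + 1)) :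
    (M * letterShift s a) i 0 = 0 := by
  simp [mul_apply, letterShift_apply]

lemma mul_letterShift_apply_succ (s : List α) (a : α)
    (M : Matrix (Fin (s.length + 1)) (Fin (s.length + 1)) ℤ) (i : Fin (s.length + 1))
    (j : Fin s.length) :
    (M * letterShift s a) i j.succ = if s[(j : ℕ)]? = some a then M i j.castSucc else 0 := by
  rw [mul_apply, Finset.sum_eq_single j.castSucc]
  · simp [letterShift_apply]
  · intro c _ hc
    have : (j : ℕ) ≠ c := fun h => hc (Fin.ext h.symm)
    simp [letterShift_apply, this]
  · simp

lemma letterShift_mem_upperBand (s : List α) (a : α) : letterShift s a ∈ upperBand ℤ _ 1 := by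
  intro i j hij
  simp [letterShift_apply]
  omega

lemma letterShift_mul_self {s : List α} (hs : s.IsChain (· ≠ ·)) (a : α) :
    letterShift s a * letterShift s a = 0 := by
  ext i j
  refine Fin.cases (by simp [mul_letterShift_apply_zero]) (fun j => ?_) j
  rw [mul_letterShift_apply_succ, letterShift_apply]
  have hne : ∀ k : ℕ, s[k]? = some a → s[k + 1]? ≠ some a := by
    intro k hk hk1
    obtain ⟨h1, rfl⟩ := List.getElem?_eq_some_iff.1 hk1
    obtain ⟨_, hk⟩ := List.getElem?_eq_some_iff.1 hk
    exact hs.getElem k h1 hk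
  simp only [Fin.val_castSucc, zero_apply]
  by_cases h : (j : ℕ) = i + 1 ∧ s[(i : ℕ)]? = some a
  · rw [if_neg (h.1 ▸ hne _ h.2)]
  · simp [h]

lemma prod_one_add_zsmul_letterShift_apply_zero (s : List α) (L : List (α × ℤ))
    (hL : L.map Prod.fst <+: s) (c : Fin (s.length + 1)) (hc : L.length ≤ c) :
    (L.map fun p => 1 + p.2 • letterShift s p.1).prod 0 c =
      if (c : ℕ) = L.length then (L.map Prod.snd).prod else 0 := by
  induction L using List.reverseRecOn generalizing c with
  | nil =>
    simp only [List.map_nil, List.prod_nil, List.length_nil, one_apply, Fin.val_eq_zero_iff,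
      eq_comm]
  | append_singleton L p ih =>
    simp only [List.map_append, List.prod_append, List.map_cons, List.map_nil, List.prod_cons,
      List.prod_nil, mul_one, List.length_append, List.length_cons, List.length_nil] at hL hc ⊢
    obtain ⟨c, rfl⟩ : ∃ c' : Fin s.length, c = c'.succ := Fin.eq_succ_of_ne_zero (by
      rintro rfl; simp at hc)
    rw [mul_add, mul_one, mul_smul_comm, add_apply, smul_apply, mul_letterShift_apply_succ]
    have hL' : L.map Prod.fst <+: s := (List.prefix_append _ _).trans hL
    simp only [Fin.val_succ, zero_add, add_le_add_iff_right] at hc ⊢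
    rw [ih hL' c.succ (by simp; omega), if_neg (by simp; omega),
      ih hL' c.castSucc (by simpa using hc)]
    simp only [Fin.val_castSucc, add_left_inj, zero_add]
    by_cases hcL : (c : ℕ) = L.length
    · obtain ⟨t, rfl⟩ := hL
      simp [hcL, mul_comm]
    · simp [hcL]

end Matrix

namespace FreeGroup

lemma lift_eq_zpow_freeGroupUnitEquivInt {G : Type*} [Group G] (f : Unit → G)
    (g : FreeGroup Unit) : lift f g = f () ^ freeGroupUnitEquivInt g := by
  conv_lhs => rw [← freeGroupUnitEquivInt.symm_apply_apply g]
  simp [freeGroupUnitEquivInt]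

lemma freeGroupUnitEquivInt_ne_zero {g : FreeGroup Unit} (hg : g ≠ 1) :
    freeGroupUnitEquivInt g ≠ 0 := by
  rw [Ne, ← Equiv.eq_symm_apply]
  simpa [freeGroupUnitEquivInt] using hg

variable {α : Type*} [DecidableEq α]

/-- The reduced word of `x` with maximal powers of a single generator grouped, read off from the
decomposition of `FreeGroup α` as a free product of copies of `FreeGroup Unit ≃ ℤ`. -/
def syllables (x : FreeGroup α) : List (α × ℤ) :=
  (Monoid.CoprodI.Word.equiv (freeGroupEquivCoprodI x)).toList.map
    fun l => (l.1, freeGroupUnitEquivInt l.2)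

lemma prod_map_syllables (x : FreeGroup α) :
    ((syllables x).map fun p => of p.1 ^ p.2).prod = x := by
  conv_rhs => rw [← freeGroupEquivCoprodI.symm_apply_apply x,
    ← Monoid.CoprodI.Word.equiv.symm_apply_apply (freeGroupEquivCoprodI x)]
  simp only [syllables, Monoid.CoprodI.Word.equiv, Equiv.coe_fn_symm_mk, Monoid.CoprodI.Word.prod,
    map_list_prod, List.map_map]
  congr 1
  refine List.map_congr_left fun l _ => ?_
  simp [lift_eq_zpow_freeGroupUnitEquivInt]

lemma isChain_map_fst_syllables (x : FreeGroup α) :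
    ((syllables x).map Prod.fst).IsChain (· ≠ ·) := by
  simpa [syllables, List.map_map, Function.comp_def, List.isChain_map] using
    (Monoid.CoprodI.Word.equiv (freeGroupEquivCoprodI x)).chain_ne

lemma snd_ne_zero_of_mem_syllables {x : FreeGroup α} {p : α × ℤ} (hp : p ∈ syllables x) :
    p.2 ≠ 0 := by
  obtain ⟨l, hl, rfl⟩ := List.mem_map.1 hp
  exact freeGroupUnitEquivInt_ne_zero ((Monoid.CoprodI.Word.equiv _).ne_one l hl)

variable {s : List α} (hs : s.IsChain (· ≠ ·))

def magnusMatrixRep : FreeGroup α →* (Matrix (Fin (s.length + 1)) (Fin (s.length + 1)) ℤ)ˣ :=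
  lift fun a => Units.oneAddOfMulSelfEqZero (Matrix.letterShift_mul_self hs a)

lemma magnusMatrixRep_mem_unitsFiltration (g : FreeGroup α) :
    magnusMatrixRep hs g ∈ unitsFiltration _ Matrix.upperBand_antitone 1 := by
  refine range_lift_le ?_ ⟨g, rfl⟩
  rintro _ ⟨a, rfl⟩
  have h := Matrix.letterShift_mem_upperBand s a
  refine ⟨?_, ?_⟩
  · rwa [Units.val_oneAddOfMulSelfEqZero, add_sub_cancel_left]
  · rwa [Units.val_inv_oneAddOfMulSelfEqZero, sub_sub_cancel_left, neg_mem_iff]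

lemma val_magnusMatrixRep_prod (L : List (α × ℤ)) :
    (magnusMatrixRep hs (L.map fun p => of p.1 ^ p.2).prod : Matrix _ _ ℤ) =
      (L.map fun p => 1 + p.2 • Matrix.letterShift s p.1).prod := by
  rw [← Units.coeHom_apply, map_list_prod, map_list_prod, List.map_map, List.map_map]
  refine congrArg List.prod (List.map_congr_left fun p _ => ?_)
  simp [magnusMatrixRep, Units.val_oneAddOfMulSelfEqZero_zpow]

end FreeGroup

theorem FreeGroup.iInf_lowerCentralSeries_eq_bot (α : Type*) :
    ⨅ k, (⊤ : Subgroup (FreeGroup α)).lowerCentralSeries k = ⊥ := by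
  classical
  refine eq_bot_iff.2 fun x hx => ?_
  rw [Subgroup.mem_bot, ← prod_map_syllables x]
  set L := syllables x
  set s := L.map Prod.fst
  obtain hL | hL := eq_or_ne L []
  · simp [hL]
  have hs : s.IsChain (· ≠ ·) := isChain_map_fst_syllables x
  have hmem := lowerCentralSeries_le_comap_unitsFiltration (magnusMatrixRep hs)
    (magnusMatrixRep_mem_unitsFiltration hs) s.length (Subgroup.mem_iInf.1 hx _)
  have hcorner := hmem.1 0 (Fin.last _) (by simp)
  have hs0 : (0 : Fin (s.length + 1)) ≠ Fin.last _ := by simp [s, hL]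
  rw [← prod_map_syllables x, val_magnusMatrixRep_prod, Matrix.sub_apply,
    Matrix.prod_one_add_zsmul_letterShift_apply_zero s L (List.prefix_refl _) (Fin.last _)
      (by simp [s]), if_pos (by simp [s]), Matrix.one_apply_ne hs0, sub_zero] at hcorner
  refine absurd hcorner (List.prod_ne_zero fun h0 => ?_)
  obtain ⟨p, hp, hp0⟩ := List.mem_map.1 h0
  exact snd_ne_zero_of_mem_syllables hp hp0

/-- The intersection of the derived series of a free group is trivial, and likewise
the intersection of its lower central series is trivial. -/
theorem free_group_derived_and_lcs_intersection_trivial (n : ℕ) :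
    (⨅ k : ℕ, derivedSeries (FreeGroup (Fin n)) k) = ⊥ ∧
    (⨅ k : ℕ, (⊤ : Subgroup (FreeGroup (Fin n))).lowerCentralSeries k) = ⊥ := by
  have h := FreeGroup.iInf_lowerCentralSeries_eq_bot (Fin n)
  exact ⟨eq_bot_iff.2 (h ▸ iInf_mono Subgroup.derived_le_lower_central), h⟩
end
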